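/- arXiv:math/0210133 — 3 statements merged into one kernel-verified Lean document; each statement's English description precedes it below -/
import Mathlib

section
/- Let Δ be a facet of a d-simplex Δ' ⊂ R^d contained in a convex set P, with supporting hyperplane H of Δ' satisfying H ∩ Δ' = Δ. If some point x ∈ P lies strictly on the other side of H from Δ', then every point in the relative interior of Δ is an interior point of P. -/
/-!
Write points in barycentric coordinates with respect to the vertices of `Δ'`, the facet `Δ`
being opposite the vertex `i`. Since `f - c` vanishes on the other vertices, it is a positive
multiple of the `i`-th coordinate, so `x` has negative `i`-th coordinate, while a relative
interior point `y` of `Δ` has `i`-th coordinate `0` and all others positive. Pushing `y` a little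
beyond itself, away from `x`, then yields a point with all coordinates positive, i.e. an interior
point of `Δ' ⊆ P`, and `y` lies on the open segment between it and `x ∈ P`.
-/

open Set Filter Topology AffineMap

theorem eventually_lineMap_mem_of_mem_intrinsicInterior {V : Type*} [AddCommGroup V]
    [Module ℝ V] [TopologicalSpace V] [IsTopologicalAddGroup V] [ContinuousSMul ℝ V]
    {s : Set V} {y w : V} (hy : y ∈ intrinsicInterior ℝ s) (hw : w ∈ s) :
    ∀ᶠ t in 𝓝 (0 : ℝ), lineMap y w t ∈ s := by
  obtain ⟨z, hz, rfl⟩ := mem_intrinsicInterior.mp hy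
  let γ : ℝ → affineSpan ℝ s := fun t =>
    ⟨lineMap (z : V) w t, lineMap_mem t z.2 (subset_affineSpan ℝ s hw)⟩
  have hγ : Continuous γ := lineMap_continuous.subtype_mk _
  have hγ0 : γ 0 = z := by simp [γ]
  filter_upwards [hγ.continuousAt.preimage_mem_nhds (isOpen_interior.mem_nhds (hγ0 ▸ hz))]
    with t ht using (interior_subset ht : γ t ∈ ((↑) ⁻¹' s : Set (affineSpan ℝ s)))

namespace AffineBasis

theorem apply_sub_eq_coord_mul {ι k V P : Type*} [CommRing k] [AddCommGroup V] [Module k V]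
    [AddTorsor V P] (b : AffineBasis ι k P) (g : P →ᵃ[k] k) {i : ι} {c : k}
    (hg : ∀ j ≠ i, g (b j) = c) (z : P) : g z - c = b.coord i z * (g (b i) - c) := by
  have key : g - const k P c = (g (b i) - c) • b.coord i := by
    refine ext_on b.tot ?_
    rintro _ ⟨j, rfl⟩
    rcases eq_or_ne j i with rfl | hj
    · simp
    · simp [hg j hj, b.coord_apply_ne hj.symm]
  simpa [mul_comm] using congr($key z)

variable {ι E : Type*} [NormedAddCommGroup E] [NormedSpace ℝ E] (b : AffineBasis ι ℝ E)

theorem coord_pos_of_mem_intrinsicInterior {s : Set ι} {j : ι} (hj : j ∈ s) {y : E}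
    (hy : y ∈ intrinsicInterior ℝ (convexHull ℝ (b '' s))) : 0 < b.coord j y := by
  have hnonneg : ∀ z ∈ convexHull ℝ (b '' s), 0 ≤ b.coord j z := fun z hz =>
    (b.convexHull_eq_nonneg_coord ▸ convexHull_mono (image_subset_range _ _) hz : _) j
  have hvertex : b j ∈ convexHull ℝ (b '' s) := subset_convexHull ℝ _ (mem_image_of_mem b hj)
  obtain ⟨t, ht, htneg : t < 0⟩ := ((eventually_lineMap_mem_of_mem_intrinsicInterior hy hvertex
    |>.filter_mono nhdsWithin_le_nhds).and (self_mem_nhdsWithin : Iio (0 : ℝ) ∈ 𝓝[<] 0)).exists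
  have h := hnonneg _ ht
  rw [apply_lineMap, b.coord_apply_eq, lineMap_apply_ring'] at h
  by_contra! hle
  nlinarith

theorem mem_interior_of_coord_eq_zero [Finite ι] {P : Set E} (hP : Convex ℝ P)
    (hsub : convexHull ℝ (range b) ⊆ P) {x y : E} (hx : x ∈ P) {i : ι}
    (hxi : b.coord i x < 0) (hyi : b.coord i y = 0) (hy : ∀ j ≠ i, 0 < b.coord j y) :
    y ∈ interior P := by
  have hnear : ∀ᶠ t in 𝓝 (1 : ℝ), ∀ j ≠ i, 0 < b.coord j (lineMap x y t) := by
    refine eventually_all.2 fun j => ?_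
    by_cases hj : j = i
    · exact Eventually.of_forall fun _ h => absurd hj h
    have hlim : Tendsto (fun t : ℝ => b.coord j (lineMap x y t)) (𝓝 1) (𝓝 (b.coord j y)) := by
      simpa [apply_lineMap] using
        (lineMap_continuous (p := b.coord j x) (q := b.coord j y)).tendsto (1 : ℝ)
    exact (hlim.eventually (lt_mem_nhds (hy j hj))).mono fun _ h _ => h
  obtain ⟨t, hpos, ht : 1 < t⟩ := ((hnear.filter_mono nhdsWithin_le_nhds).and
    (self_mem_nhdsWithin : Ioi (1 : ℝ) ∈ 𝓝[>] 1)).exists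
  have hz : lineMap x y t ∈ interior P := interior_mono hsub <| by
    rw [b.interior_convexHull]
    intro j
    rcases eq_or_ne j i with rfl | hj
    · rw [apply_lineMap, hyi, lineMap_apply_ring]
      nlinarith
    · exact hpos j hj
  have hy_eq : lineMap x (lineMap x y t) t⁻¹ = y := by
    rw [lineMap_lineMap_right, inv_mul_cancel₀ (by positivity), lineMap_apply_one]
  rw [← hy_eq]
  exact hP.openSegment_self_interior_subset_interior hx hz
    (lineMap_mem_openSegment _ _ _ ⟨by positivity, inv_lt_one_of_one_lt₀ ht⟩)

end AffineBasis

theorem stmt8_general {d : ℕ} (P : Set (EuclideanSpace ℝ (Fin d))) (hP : Convex ℝ P)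
    (x' : Fin (d + 1) → EuclideanSpace ℝ (Fin d)) (hindep : AffineIndependent ℝ x')
    (hsub : convexHull ℝ (Set.range x') ⊆ P)
    (f : EuclideanSpace ℝ (Fin d) →ₗ[ℝ] ℝ) (c : ℝ) (i : Fin (d + 1))
    (hpos : ∀ y ∈ convexHull ℝ (Set.range x'), c ≤ f y)
    (hface : {y ∈ convexHull ℝ (Set.range x') | f y = c} = convexHull ℝ (x' '' {j | j ≠ i}))
    (x : EuclideanSpace ℝ (Fin d)) (hx : x ∈ P) (hxneg : f x < c) :
    ∀ y ∈ intrinsicInterior ℝ (convexHull ℝ (x' '' {j | j ≠ i})), y ∈ interior P := by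
  intro y hy
  let b : AffineBasis (Fin (d + 1)) ℝ (EuclideanSpace ℝ (Fin d)) :=
    ⟨x', hindep, hindep.affineSpan_eq_top_iff_card_eq_finrank_add_one.2 (by simp)⟩
  have hfacet : ∀ z ∈ convexHull ℝ (x' '' {j | j ≠ i}), f z = c := fun z hz =>
    (hface.symm ▸ hz : z ∈ {y ∈ convexHull ℝ (Set.range x') | f y = c}).2
  have hlevel : ∀ z, f z - c = b.coord i z * (f (x' i) - c) :=
    b.apply_sub_eq_coord_mul f.toAffineMap fun j hj => hfacet _ (subset_convexHull ℝ _ ⟨j, hj, rfl⟩)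
  have hgap : 0 < f (x' i) - c := by
    refine lt_of_le_of_ne (sub_nonneg.2 (hpos _ (subset_convexHull ℝ _ (mem_range_self i)))) ?_
    intro h
    have := hlevel x
    rw [← h, mul_zero] at this
    linarith
  have hxi : b.coord i x < 0 := neg_of_mul_neg_left (by linarith [hlevel x]) hgap.le
  have hyi : b.coord i y = 0 := by
    have := hlevel y
    rw [hfacet y (intrinsicInterior_subset hy), sub_self] at this
    exact (mul_eq_zero.1 this.symm).resolve_right hgap.ne'
  exact b.mem_interior_of_coord_eq_zero hP hsub hx hxi hyi fun j hj =>
    b.coord_pos_of_mem_intrinsicInterior hj hy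

/-- Let `Δ'` be a `d`-simplex in `ℝ^d` contained in a convex set `P`, let `H = {y | f y = c}`
be a supporting hyperplane of `Δ'` (with `Δ' ⊆ H⁺`) intersecting `Δ'` exactly in the facet `Δ`
opposite the vertex `x' i`.  If some point `x ∈ P` lies strictly on the other side of `H`,
then every relative interior point of `Δ` is an interior point of `P`. -/
theorem stmt8 {d : ℕ} (P : Set (EuclideanSpace ℝ (Fin d))) (hP : Convex ℝ P)
    (x' : Fin (d + 1) → EuclideanSpace ℝ (Fin d)) (hindep : AffineIndependent ℝ x')
    (hsub : convexHull ℝ (Set.range x') ⊆ P)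
    (f : EuclideanSpace ℝ (Fin d) →ₗ[ℝ] ℝ) (c : ℝ) (hf : f ≠ 0) (i : Fin (d + 1))
    (hpos : ∀ y ∈ convexHull ℝ (Set.range x'), c ≤ f y)
    (hface : {y ∈ convexHull ℝ (Set.range x') | f y = c} = convexHull ℝ (x' '' {j | j ≠ i}))
    (x : EuclideanSpace ℝ (Fin d)) (hx : x ∈ P) (hxneg : f x < c) :
    ∀ y ∈ intrinsicInterior ℝ (convexHull ℝ (x' '' {j | j ≠ i})), y ∈ interior P :=
  stmt8_general P hP x' hindep hsub f c i hpos hface x hx hxneg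
end

section
/- Every polytope P = conv(X) with X finite admits a triangulation whose vertices all belong to X. -/
/-!
Induct on `X`, adding one point `a` at a time ("placing" `a`). If `a ∈ conv Y`, the triangulation
`K` of `conv Y` still works. Otherwise keep `K` and add the cone `insert a s` over every face `s`
that is entirely visible from `a`, i.e. no point of `conv Y` lies strictly between `a` and a point
of `conv s`. Visibility puts `a` outside the affine span of `s`, and two points of `conv Y` seen
from `a` in the same direction coincide, so two cones meet exactly in the cone over the common
face. A point `z ∈ conv (insert a Y)` outside `conv Y` lies between `a` and the first point `y` of
`conv Y` on the ray from `a` through `z`; `y` is visible, and a visible point in the relative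
interior of a face makes the whole face visible, so `z` lies in a cone.
-/

open Geometry Set Finset Filter Topology

lemma AffineIndependent.insert_of_notMem_affineSpan {k V P : Type*} [DivisionRing k]
    [AddCommGroup V] [Module k V] [AddTorsor V P] {s : Set P} {a : P}
    (hs : AffineIndependent k ((↑) : s → P)) (ha : a ∉ affineSpan k s) :
    AffineIndependent k ((↑) : ↥(insert a s) → P) := by
  have has : a ∉ s := fun h => ha (subset_affineSpan k s h)
  refine AffineIndependent.affineIndependent_of_notMem_span (k := k)
    (p := ((↑) : ↥(insert a s) → P)) (i := ⟨a, mem_insert a s⟩) ?_ ?_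
  · let f : {y : ↥(insert a s) // y ≠ ⟨a, mem_insert a s⟩} ↪ s :=
      ⟨fun y => ⟨y.1.1, y.1.2.resolve_left fun h => y.2 (Subtype.ext h)⟩,
        fun _ _ h => by simpa [Subtype.ext_iff] using h⟩
    exact hs.comp_embedding f
  · convert ha
    ext x
    simp only [mem_image, ne_eq, mem_ofPred_eq, Subtype.exists, mem_insert_iff, Subtype.mk.injEq]
    constructor
    · rintro ⟨x, hx | hx, hxa, rfl⟩
      · exact absurd hx hxa
      · exact hx
    · intro hx
      exact ⟨x, Or.inr hx, fun h => has (h ▸ hx), rfl⟩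

variable {E : Type*} [AddCommGroup E] [Module ℝ E]

lemma sbtw_of_mem_openSegment {x y z : E} (h : y ∈ openSegment ℝ x z) (hxz : x ≠ z) :
    Sbtw ℝ x y z :=
  sbtw_iff_mem_image_Ioo_and_ne.2 ⟨by rwa [← openSegment_eq_image_lineMap], hxz⟩

lemma wbtw_total_of_wbtw_right {a x y z : E} (hx : Wbtw ℝ a x z) (hy : Wbtw ℝ a y z) :
    Wbtw ℝ a x y ∨ Wbtw ℝ a y x := by
  rcases eq_or_ne z a with rfl | hz
  · rw [wbtw_self_iff] at hx hy
    simp [hx, hy, wbtw_self_left]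
  refine wbtw_total_of_sameRay_vsub_left ?_
  exact hx.sameRay_vsub_left.trans hy.sameRay_vsub_left.symm
    fun h => (hz (vsub_eq_zero_iff_eq.1 h)).elim

lemma wbtw_total_of_wbtw_left {a x y z : E} (hx : Wbtw ℝ a z x) (hy : Wbtw ℝ a z y)
    (hz : z ≠ a) : Wbtw ℝ a x y ∨ Wbtw ℝ a y x :=
  wbtw_total_of_sameRay_vsub_left <| hx.sameRay_vsub_left.symm.trans hy.sameRay_vsub_left
    fun h => (hz (vsub_eq_zero_iff_eq.1 h)).elim

lemma convexHull_insert_convexHull (a : E) (S : Set E) :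
    convexHull ℝ (insert a (convexHull ℝ S)) = convexHull ℝ (insert a S) := by
  simp only [Set.insert_eq, convexHull_convexHull_union_right]

variable {C : Set E} {a u v y w z : E}

lemma IsVisible.eq_of_wbtw (hy : y ∈ C) (hw : w ∈ C) (hvy : IsVisible ℝ C a y)
    (hvw : IsVisible ℝ C a w) (hzy : Wbtw ℝ a z y) (hzw : Wbtw ℝ a z w) (hz : z ≠ a) : y = w := by
  have hya : y ≠ a := fun h => hz ((wbtw_self_iff ℝ).1 (h ▸ hzy))
  have hwa : w ≠ a := fun h => hz ((wbtw_self_iff ℝ).1 (h ▸ hzw))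
  by_contra hyw
  rcases wbtw_total_of_wbtw_left hzy hzw hz with h | h
  · exact hvw hy ⟨h, hya, hyw⟩
  · exact hvy hw ⟨h, hwa, Ne.symm hyw⟩

lemma IsVisible.of_mem_openSegment (hC : Convex ℝ C) (ha : a ∉ C) (hu : u ∈ C) (hv : v ∈ C)
    (hy : y ∈ openSegment ℝ u v) (h : IsVisible ℝ C a y) : IsVisible ℝ C a u := by
  obtain ⟨α, β, hα, hβ, hαβ, rfl⟩ := hy
  have := IsVisible.of_convexHull_of_pos (t := Finset.univ) (a := ![u, v]) (w := ![α, β])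
    (s := C) (x := a) (fun i _ => by fin_cases i <;> simp [hα.le, hβ.le]) (by simpa using hαβ)
    (fun i _ => by fin_cases i <;> simp [hu, hv]) (by rwa [hC.convexHull_eq])
    (by simpa [hC.convexHull_eq] using h) (i := 0) (Finset.mem_univ _) (by simpa using hα)
  simpa [hC.convexHull_eq] using this

section Topology
variable [TopologicalSpace E] [IsTopologicalAddGroup E] [ContinuousSMul ℝ E]

lemma IsClosed.exists_wbtw_isVisible_of_wbtw (hC : IsClosed C) (hCc : Convex ℝ C) (hy : y ∈ C)
    (hzy : Wbtw ℝ a z y) (hz : z ∉ C) : ∃ y' ∈ C, Wbtw ℝ a z y' ∧ IsVisible ℝ C a y' := by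
  obtain ⟨y', hy', hay'y, hvis⟩ := hC.exists_wbtw_isVisible hy a
  refine ⟨y', hy', ?_, hvis⟩
  rcases wbtw_total_of_wbtw_right hzy hay'y with h | h
  · exact h
  · exact absurd (hCc.mem_of_wbtw (hzy.trans_left_right h) hy' hy) hz
end Topology

lemma mem_convexHull_insert_iff_wbtw {S : Set E} {a z : E} :
    z ∈ convexHull ℝ (insert a S) ↔ z = a ∨ ∃ w ∈ convexHull ℝ S, Wbtw ℝ a z w := by
  rcases S.eq_empty_or_nonempty with rfl | hS
  · simp
  rw [convexHull_insert hS, convexJoin_singleton_left, mem_iUnion₂]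
  simp_rw [mem_segment_iff_wbtw]
  refine ⟨fun ⟨w, hw, h⟩ => Or.inr ⟨w, hw, h⟩, ?_⟩
  rintro (rfl | ⟨w, hw, h⟩)
  · obtain ⟨w, hw⟩ := hS.convexHull (𝕜 := ℝ)
    exact ⟨w, hw, wbtw_self_left _ _ _⟩
  · exact ⟨w, hw, h⟩

lemma Finset.exists_weights_of_mem_affineSpan {s : Finset E} {p : E}
    (hp : p ∈ affineSpan ℝ (s : Set E)) :
    ∃ v : E → ℝ, ∑ i ∈ s, v i = 1 ∧ ∑ i ∈ s, v i • i = p := by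
  classical
  rw [← Set.image_id (s : Set E)] at hp
  obtain ⟨fs, v, hfs, hv, rfl⟩ := eq_affineCombination_of_mem_affineSpan_image hp
  have hfs : s ∩ fs = fs := Finset.inter_eq_right.2 (Finset.coe_subset.1 hfs)
  refine ⟨fun i => if i ∈ fs then v i else 0, ?_, ?_⟩
  · rw [Finset.sum_ite_mem, hfs, hv]
  · simp_rw [ite_smul, zero_smul]
    rw [Finset.sum_ite_mem, hfs, fs.affineCombination_eq_linear_combination _ _ hv]
    rfl

lemma Finset.exists_mem_convexHull_mem_openSegment {s : Finset E} {w : E → ℝ}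
    (hw₀ : ∀ i ∈ s, 0 < w i) (hw₁ : ∑ i ∈ s, w i = 1) {p : E}
    (hp : p ∈ affineSpan ℝ (s : Set E)) :
    ∃ q ∈ convexHull ℝ (s : Set E), ∑ i ∈ s, w i • i ∈ openSegment ℝ p q := by
  obtain ⟨v, hv₁, rfl⟩ := s.exists_weights_of_mem_affineSpan hp
  have hpos : ∀ᶠ t in 𝓝[>] (0 : ℝ), ∀ i ∈ s, 0 < (1 + t) * w i - t * v i := by
    refine (eventually_all_finset s).2 fun i hi => ?_
    have hcont : Continuous fun t : ℝ => (1 + t) * w i - t * v i := by fun_prop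
    exact (hcont.tendsto' 0 _ (by simp)).eventually_const_lt (hw₀ i hi) |>.filter_mono
      nhdsWithin_le_nhds
  obtain ⟨t, ht, ht₀⟩ := (hpos.and self_mem_nhdsWithin).exists
  refine ⟨∑ i ∈ s, ((1 + t) * w i - t * v i) • i, ?_, ?_⟩
  · refine Finset.mem_convexHull'.2 ⟨_, fun i hi => (ht i hi).le, ?_, rfl⟩
    rw [sum_sub_distrib, ← mul_sum, ← mul_sum, hw₁, hv₁]
    ring
  · refine ⟨t / (1 + t), 1 / (1 + t), by positivity, by positivity, by field_simp; ring, ?_⟩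
    simp_rw [smul_sum, smul_smul, ← sum_add_distrib, ← add_smul]
    refine sum_congr rfl fun i _ => ?_
    congr 1
    field_simp
    ring

lemma Finset.notMem_affineSpan_of_isVisible {s : Finset E} (hsC : convexHull ℝ (s : Set E) ⊆ C)
    (ha : a ∉ C) (hvis : ∀ u ∈ convexHull ℝ (s : Set E), IsVisible ℝ C a u) :
    a ∉ affineSpan ℝ (s : Set E) := by
  intro has
  rcases s.eq_empty_or_nonempty with rfl | hs
  · exact AffineSubspace.notMem_bot ℝ E a (by simpa using has)
  have hcard : (0 : ℝ) < #s := by exact_mod_cast hs.card_pos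
  have hw₁ : ∑ _i ∈ s, (#s : ℝ)⁻¹ = 1 := by
    rw [sum_const, nsmul_eq_mul, mul_inv_cancel₀ hcard.ne']
  obtain ⟨q, hq, hyq⟩ :=
    s.exists_mem_convexHull_mem_openSegment (fun _ _ => inv_pos.2 hcard) hw₁ has
  have hy : ∑ i ∈ s, (#s : ℝ)⁻¹ • i ∈ convexHull ℝ (s : Set E) :=
    Finset.mem_convexHull'.2 ⟨_, fun _ _ => (inv_pos.2 hcard).le, hw₁, rfl⟩
  have hya : ∑ i ∈ s, (#s : ℝ)⁻¹ • i ≠ a := fun h => ha (h ▸ hsC hy)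
  refine hvis q hq (hsC hy) (sbtw_of_mem_openSegment hyq ?_)
  rintro rfl
  rw [openSegment_same, mem_singleton_iff] at hyq
  exact hya hyq

lemma Finset.isVisible_of_isVisible_sum (hC : Convex ℝ C) (ha : a ∉ C) {s : Finset E}
    (hsC : (s : Set E) ⊆ C) {w : E → ℝ} (hw₀ : ∀ i ∈ s, 0 < w i) (hw₁ : ∑ i ∈ s, w i = 1)
    (h : IsVisible ℝ C a (∑ i ∈ s, w i • i)) (hu : u ∈ convexHull ℝ (s : Set E)) :
    IsVisible ℝ C a u := by
  have hsC' : convexHull ℝ (s : Set E) ⊆ C := convexHull_min hsC hC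
  obtain ⟨q, hq, hyq⟩ :=
    s.exists_mem_convexHull_mem_openSegment hw₀ hw₁ (convexHull_subset_affineSpan _ hu)
  exact h.of_mem_openSegment hC ha (hsC' hu) (hsC' hq) hyq

namespace Geometry.SimplicialComplex

variable (K : SimplicialComplex ℝ E)

lemma exists_face_pos_weights_of_mem_space (hy : y ∈ K.space) :
    ∃ s ∈ K.faces, ∃ w : E → ℝ,
      (∀ i ∈ s, 0 < w i) ∧ ∑ i ∈ s, w i = 1 ∧ ∑ i ∈ s, w i • i = y := by
  classical
  obtain ⟨s, hs, hys⟩ := K.mem_space_iff.1 hy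
  obtain ⟨w, hw₀, hw₁, rfl⟩ := Finset.mem_convexHull'.1 hys
  have hw₁' : ∑ i ∈ s with w i ≠ 0, w i = 1 := by rwa [sum_filter_ne_zero]
  refine ⟨{i ∈ s | w i ≠ 0}, K.down_closed hs (filter_subset _ _) ?_, w, ?_, hw₁', ?_⟩
  · exact nonempty_of_sum_ne_zero (by rw [hw₁']; exact one_ne_zero)
  · intro i hi
    rw [mem_filter] at hi
    exact (hw₀ i hi.1).lt_of_ne' hi.2
  · exact sum_filter_of_ne fun i _ hi h => hi (by rw [h, zero_smul])

lemma isLowerSet_insert_empty_faces : IsLowerSet (insert ∅ K.faces) := by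
  intro s t hts hs
  rcases t.eq_empty_or_nonempty with rfl | ht
  · exact mem_insert _ _
  rcases hs with rfl | hs
  · exact absurd (Finset.subset_empty.1 hts) ht.ne_empty
  · exact Or.inr (K.down_closed hs hts ht)

lemma convexHull_subset_space_of_mem_insert_empty {s : Finset E} (hs : s ∈ insert ∅ K.faces) :
    convexHull ℝ (s : Set E) ⊆ K.space := by
  rcases hs with rfl | hs
  · simp
  · exact K.convexHull_subset_space hs

lemma inter_subset_convexHull_of_mem_insert_empty {s t : Finset E} (hs : s ∈ insert ∅ K.faces)
    (ht : t ∈ insert ∅ K.faces) :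
    convexHull ℝ (s : Set E) ∩ convexHull ℝ t ⊆ convexHull ℝ (s ∩ t : Set E) := by
  rcases hs with rfl | hs
  · simp
  rcases ht with rfl | ht
  · simp
  exact K.inter_subset_convexHull hs ht

def visibleFaces (a : E) : Set (Finset E) :=
  {s ∈ insert ∅ K.faces | ∀ u ∈ convexHull ℝ (s : Set E), IsVisible ℝ K.space a u}

lemma isLowerSet_visibleFaces (a : E) : IsLowerSet (K.visibleFaces a) :=
  fun _ _ hts hs => ⟨K.isLowerSet_insert_empty_faces hts hs.1,
    fun u hu => hs.2 u (convexHull_mono (Finset.coe_subset.2 hts) hu)⟩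

variable [DecidableEq E]

/-- The empty face is kept so that this is a lower set; its cone is the vertex `{a}`. -/
def placingFaces (a : E) : Set (Finset E) :=
  insert ∅ K.faces ∪ insert a '' K.visibleFaces a

lemma isLowerSet_placingFaces (a : E) : IsLowerSet (K.placingFaces a) := by
  rintro s t hts (hs | ⟨s, hs, rfl⟩)
  · exact Or.inl (K.isLowerSet_insert_empty_faces hts hs)
  by_cases hat : a ∈ t
  · exact Or.inr ⟨t.erase a, K.isLowerSet_visibleFaces a (Finset.subset_insert_iff.1 hts) hs,
      Finset.insert_erase hat⟩
  · exact Or.inl (K.isLowerSet_insert_empty_faces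
      ((Finset.subset_insert_iff_of_notMem hat).1 hts) hs.1)

lemma affineIndependent_of_mem_placingFaces {a : E} (ha : a ∉ K.space) {s : Finset E}
    (hs : s ∈ K.placingFaces a) : AffineIndependent ℝ ((↑) : s → E) := by
  rcases hs with (rfl | hs) | ⟨s, hs, rfl⟩
  · exact affineIndependent_of_subsingleton ℝ _
  · exact K.indep hs
  show AffineIndependent ℝ ((↑) : ↥((↑(insert a s) : Set E)) → E)
  rw [Finset.coe_insert]
  refine AffineIndependent.insert_of_notMem_affineSpan ?_
    (s.notMem_affineSpan_of_isVisible
      (K.convexHull_subset_space_of_mem_insert_empty hs.1) ha hs.2)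
  rcases hs.1 with rfl | hs
  · rw [Finset.coe_empty]
    exact affineIndependent_of_subsingleton ℝ _
  · exact K.indep hs

lemma convexHull_inter_convexHull_insert_subset {a : E} (ha : a ∉ K.space) {s t : Finset E}
    (hs : s ∈ insert ∅ K.faces) (ht : t ∈ K.visibleFaces a) :
    convexHull ℝ (s : Set E) ∩ convexHull ℝ ↑(insert a t) ⊆
      convexHull ℝ (s ∩ ↑(insert a t) : Set E) := by
  rintro z ⟨hzs, hzt⟩
  have hzK : z ∈ K.space := K.convexHull_subset_space_of_mem_insert_empty hs hzs
  rw [Finset.coe_insert, mem_convexHull_insert_iff_wbtw] at hzt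
  obtain rfl | ⟨w, hw, hzw⟩ := hzt
  · exact absurd hzK ha
  obtain rfl : z = w := by
    by_contra hzw'
    exact ht.2 w hw hzK ⟨hzw, fun h => ha (h ▸ hzK), hzw'⟩
  refine convexHull_mono ?_ (K.inter_subset_convexHull_of_mem_insert_empty hs ht.1 ⟨hzs, hw⟩)
  exact Set.inter_subset_inter_right _ (by simp)

lemma convexHull_insert_inter_convexHull_insert_subset {a : E} {s t : Finset E}
    (hs : s ∈ K.visibleFaces a) (ht : t ∈ K.visibleFaces a) :
    convexHull ℝ ↑(insert a s) ∩ convexHull ℝ ↑(insert a t) ⊆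
      convexHull ℝ (↑(insert a s) ∩ ↑(insert a t) : Set E) := by
  rintro z ⟨hzs, hzt⟩
  rw [← Finset.coe_inter, ← Finset.insert_inter_distrib, Finset.coe_insert,
    mem_convexHull_insert_iff_wbtw]
  rw [Finset.coe_insert, mem_convexHull_insert_iff_wbtw] at hzs hzt
  rcases eq_or_ne z a with rfl | hza
  · exact Or.inl rfl
  obtain ⟨y, hy, hzy⟩ := hzs.resolve_left hza
  obtain ⟨w, hw, hzw⟩ := hzt.resolve_left hza
  obtain rfl : y = w := (hs.2 y hy).eq_of_wbtw
    (K.convexHull_subset_space_of_mem_insert_empty hs.1 hy)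
    (K.convexHull_subset_space_of_mem_insert_empty ht.1 hw) (ht.2 w hw) hzy hzw hza
  rw [Finset.coe_inter]
  exact Or.inr ⟨y, K.inter_subset_convexHull_of_mem_insert_empty hs.1 ht.1 ⟨hy, hw⟩, hzy⟩

lemma inter_subset_convexHull_of_mem_placingFaces {a : E} (ha : a ∉ K.space) {s t : Finset E}
    (hs : s ∈ K.placingFaces a) (ht : t ∈ K.placingFaces a) :
    convexHull ℝ (s : Set E) ∩ convexHull ℝ t ⊆ convexHull ℝ (s ∩ t : Set E) := by
  rcases hs with hs | ⟨s, hs, rfl⟩ <;> rcases ht with ht | ⟨t, ht, rfl⟩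
  · exact K.inter_subset_convexHull_of_mem_insert_empty hs ht
  · exact K.convexHull_inter_convexHull_insert_subset ha hs ht
  · rw [Set.inter_comm, Set.inter_comm (↑(insert a s) : Set E)]
    exact K.convexHull_inter_convexHull_insert_subset ha ht hs
  · exact K.convexHull_insert_inter_convexHull_insert_subset hs ht

def placing {a : E} (ha : a ∉ K.space) : SimplicialComplex ℝ E :=
  ofErase (K.placingFaces a) (fun _ => K.affineIndependent_of_mem_placingFaces ha)
    (K.isLowerSet_placingFaces a)
    (fun _ hs _ ht => K.inter_subset_convexHull_of_mem_placingFaces ha hs ht)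

variable {K}

lemma placing_faces_finite (hK : K.faces.Finite) {a : E} (ha : a ∉ K.space) :
    (K.placing ha).faces.Finite := by
  have h₀ : (insert ∅ K.faces).Finite := hK.insert ∅
  exact ((h₀.union ((h₀.subset fun _ hs => hs.1).image _)).subset sdiff_subset)

lemma placing_vertices_subset {a : E} (ha : a ∉ K.space) :
    (K.placing ha).vertices ⊆ insert a K.vertices := by
  rintro x ⟨(hx | hx) | ⟨s, -, hs⟩, hx₀⟩
  · exact absurd hx (Finset.singleton_ne_empty x)
  · exact Or.inr hx
  · exact Or.inl (Finset.mem_singleton.1 (hs ▸ Finset.mem_insert_self a s)).symm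

lemma mem_placing_space_iff {a : E} (ha : a ∉ K.space) :
    z ∈ (K.placing ha).space ↔ ∃ s ∈ K.placingFaces a, z ∈ convexHull ℝ (s : Set E) := by
  refine ⟨fun h => ?_, fun ⟨s, hs, hz⟩ => ?_⟩
  · obtain ⟨s, hs, hz⟩ := mem_space_iff.1 h
    exact ⟨s, hs.1, hz⟩
  · refine mem_space_iff.2 ⟨s, ⟨hs, ?_⟩, hz⟩
    rintro rfl
    simp at hz

section Topology
variable [TopologicalSpace E] [IsTopologicalAddGroup E] [ContinuousSMul ℝ E]

lemma placing_space (hconv : Convex ℝ K.space) (hclosed : IsClosed K.space) {a : E}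
    (ha : a ∉ K.space) : (K.placing ha).space = convexHull ℝ (insert a K.space) := by
  ext z
  rw [mem_placing_space_iff]
  constructor
  · rintro ⟨s, (hs | ⟨s, hs, rfl⟩), hz⟩
    · exact subset_convexHull ℝ _
        (mem_insert_of_mem a (K.convexHull_subset_space_of_mem_insert_empty hs hz))
    · rw [Finset.coe_insert] at hz
      exact convexHull_mono (insert_subset_insert ((subset_convexHull ℝ _).trans
        (K.convexHull_subset_space_of_mem_insert_empty hs.1))) hz
  intro hz
  rw [mem_convexHull_insert_iff_wbtw, hconv.convexHull_eq] at hz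
  obtain rfl | ⟨y, hy, hzy⟩ := hz
  · exact ⟨{z}, Or.inr ⟨∅, ⟨mem_insert _ _, by simp⟩, Finset.insert_empty⟩, by simp⟩
  by_cases hzK : z ∈ K.space
  · obtain ⟨s, hs, hz⟩ := mem_space_iff.1 hzK
    exact ⟨s, Or.inl (Or.inr hs), hz⟩
  obtain ⟨y', hy', hzy', hvis⟩ := hclosed.exists_wbtw_isVisible_of_wbtw hconv hy hzy hzK
  obtain ⟨s, hs, w, hw₀, hw₁, rfl⟩ := K.exists_face_pos_weights_of_mem_space hy'
  have hsvis : s ∈ K.visibleFaces a :=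
    ⟨Or.inr hs, fun _ => s.isVisible_of_isVisible_sum hconv ha (K.subset_space hs) hw₀ hw₁ hvis⟩
  refine ⟨insert a s, Or.inr ⟨s, hsvis, rfl⟩, ?_⟩
  rw [Finset.coe_insert, mem_convexHull_insert_iff_wbtw]
  exact Or.inr ⟨_, Finset.mem_convexHull'.2 ⟨w, fun i hi => (hw₀ i hi).le, hw₁, rfl⟩, hzy'⟩
end Topology

end Geometry.SimplicialComplex

/-- Every polytope `P = conv(X)` with `X` finite admits a triangulation all of whose vertices
belong to `X`: there is a finite geometric simplicial complex whose union is `P` and whose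
vertex set is contained in `X`. -/
theorem stmt9 {d : ℕ} (X : Set (EuclideanSpace ℝ (Fin d))) (hX : X.Finite) :
    ∃ K : Geometry.SimplicialComplex ℝ (EuclideanSpace ℝ (Fin d)),
      K.faces.Finite ∧ K.space = convexHull ℝ X ∧ K.vertices ⊆ X := by
  classical
  induction X, hX using Set.Finite.induction_on with
  | empty =>
    exact ⟨⊥, finite_empty, by simp [SimplicialComplex.space_bot],
      by simp [SimplicialComplex.vertices, SimplicialComplex.faces_bot]⟩
  | @insert a Y _ hY ih =>
    obtain ⟨K, hKfin, hKspace, hKvert⟩ := ih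
    by_cases ha : a ∈ convexHull ℝ Y
    · refine ⟨K, hKfin, ?_, hKvert.trans (subset_insert a Y)⟩
      rw [hKspace, ← convexHull_insert_convexHull, insert_eq_of_mem ha,
        (convex_convexHull ℝ Y).convexHull_eq]
    · rw [← hKspace] at ha
      refine ⟨K.placing ha, SimplicialComplex.placing_faces_finite hKfin ha, ?_,
        (SimplicialComplex.placing_vertices_subset ha).trans (insert_subset_insert hKvert)⟩
      rw [SimplicialComplex.placing_space (hKspace ▸ convex_convexHull ℝ Y)
        (hKspace ▸ (hY.isCompact_convexHull ℝ).isClosed), hKspace, convexHull_insert_convexHull]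
end

section
/- The dwarfed d-cube c_d = [0,1]^d ∩ {x : Σ x_i ≤ 3/2} has exactly d^2 + 1 vertices, namely the origin, the d unit vectors e_i, and the d(d-1) points e_i + (1/2)e_j for i ≠ j. -/
namespace Stmt16

variable {d : ℕ}

local notation "E" => EuclideanSpace ℝ (Fin d)

/-- The candidate set as a function of a pair of indices. -/
noncomputable def phi (p : Fin d × Fin d) : EuclideanSpace ℝ (Fin d) :=
  if p.1 = p.2 then EuclideanSpace.single p.1 (1:ℝ)
  else EuclideanSpace.single p.1 (1:ℝ) + (1/2:ℝ) • EuclideanSpace.single p.2 (1:ℝ)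

lemma pair_le_sum {x : EuclideanSpace ℝ (Fin d)} (h0 : ∀ k, 0 ≤ x k) {i j : Fin d}
    (hij : i ≠ j) : x i + x j ≤ ∑ k, x k := by
  have h := Finset.sum_le_sum_of_subset_of_nonneg (Finset.subset_univ {i, j})
    (fun k _ _ => h0 k)
  rwa [Finset.sum_pair hij] at h

lemma comb_le {a b y z c : ℝ} (ha : 0 < a) (hb : 0 < b) (hab : a + b = 1)
    (hy : y ≤ c) (hz : z ≤ c) (h : a * y + b * z = c) : y = c ∧ z = c := by
  have h2 : b * z ≤ b * c := mul_le_mul_of_nonneg_left hz hb.le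
  have h1 : a * y ≤ a * c := mul_le_mul_of_nonneg_left hy ha.le
  have hc : a * c + b * c = c := by rw [← add_mul, hab, one_mul]
  constructor
  · by_contra hne
    have hlt : a * y < a * c := mul_lt_mul_of_pos_left (lt_of_le_of_ne hy hne) ha
    linarith
  · by_contra hne
    have hlt : b * z < b * c := mul_lt_mul_of_pos_left (lt_of_le_of_ne hz hne) hb
    linarith

lemma comb_ge {a b y z c : ℝ} (ha : 0 < a) (hb : 0 < b) (hab : a + b = 1)
    (hy : c ≤ y) (hz : c ≤ z) (h : a * y + b * z = c) : y = c ∧ z = c := by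
  have h2 : b * c ≤ b * z := mul_le_mul_of_nonneg_left hz hb.le
  have h1 : a * c ≤ a * y := mul_le_mul_of_nonneg_left hy ha.le
  have hc : a * c + b * c = c := by rw [← add_mul, hab, one_mul]
  constructor
  · by_contra hne
    have hlt : a * c < a * y := mul_lt_mul_of_pos_left (lt_of_le_of_ne hy (Ne.symm hne)) ha
    linarith
  · by_contra hne
    have hlt : b * c < b * z := mul_lt_mul_of_pos_left (lt_of_le_of_ne hz (Ne.symm hne)) hb
    linarith

section Main

variable (C : Set (EuclideanSpace ℝ (Fin d)))
  (hC : C = {x : EuclideanSpace ℝ (Fin d) |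
      (∀ i, 0 ≤ x i ∧ x i ≤ 1) ∧ ∑ i, x i ≤ 3 / 2})

include hC

lemma mem_C_iff (x : EuclideanSpace ℝ (Fin d)) :
    x ∈ C ↔ (∀ i, 0 ≤ x i ∧ x i ≤ 1) ∧ ∑ i, x i ≤ 3 / 2 := by
  rw [hC]; rfl

omit hC

/-- pointwise consequence of an open-segment membership -/
lemma seg_pointwise {x y z : EuclideanSpace ℝ (Fin d)} {a b : ℝ}
    (h : a • y + b • z = x) (k : Fin d) : a * y k + b * z k = x k := by
  have := congrArg (fun v : EuclideanSpace ℝ (Fin d) => v k) h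
  simpa using this

include hC

lemma zero_extreme : (0 : EuclideanSpace ℝ (Fin d)) ∈ Set.extremePoints ℝ C := by
  rw [mem_extremePoints]
  refine ⟨by
    rw [mem_C_iff C hC]
    refine ⟨fun i => ?_, ?_⟩
    · simp only [PiLp.zero_apply]; norm_num
    · simp only [PiLp.zero_apply, Finset.sum_const_zero]; norm_num, ?_⟩
  intro y hy z hz hseg
  rw [mem_C_iff C hC] at hy hz
  obtain ⟨a, b, ha, hb, hab, hsum⟩ := hseg
  have key : ∀ k, y k = 0 ∧ z k = 0 := by
    intro k
    have h := seg_pointwise hsum k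
    simp only [PiLp.zero_apply] at h
    exact comb_ge ha hb hab (hy.1 k).1 (hz.1 k).1 h
  exact ⟨PiLp.ext fun k => (key k).1, PiLp.ext fun k => (key k).2⟩

lemma single_extreme (i : Fin d) :
    EuclideanSpace.single i (1:ℝ) ∈ Set.extremePoints ℝ C := by
  rw [mem_extremePoints]
  have hmem : EuclideanSpace.single i (1:ℝ) ∈ C := by
    rw [mem_C_iff C hC]
    refine ⟨fun k => ?_, ?_⟩
    · simp [EuclideanSpace.single_apply]; split <;> norm_num
    · simp [EuclideanSpace.single_apply]; norm_num
  refine ⟨hmem, ?_⟩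
  intro y hy z hz hseg
  rw [mem_C_iff C hC] at hy hz
  obtain ⟨a, b, ha, hb, hab, hsum⟩ := hseg
  have key : ∀ k, y k = EuclideanSpace.single i (1:ℝ) k ∧
      z k = EuclideanSpace.single i (1:ℝ) k := by
    intro k
    have h := seg_pointwise hsum k
    rw [EuclideanSpace.single_apply] at h ⊢
    by_cases hk : k = i
    · simp only [hk, if_pos rfl, if_true] at h ⊢
      exact comb_le ha hb hab (hy.1 i).2 (hz.1 i).2 h
    · simp only [if_neg hk] at h ⊢
      exact comb_ge ha hb hab (hy.1 k).1 (hz.1 k).1 h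
  exact ⟨PiLp.ext fun k => (key k).1, PiLp.ext fun k => (key k).2⟩

lemma mix_extreme {i j : Fin d} (hij : i ≠ j) :
    EuclideanSpace.single i (1:ℝ) + (1/2:ℝ) • EuclideanSpace.single j (1:ℝ) ∈
      Set.extremePoints ℝ C := by
  set w : EuclideanSpace ℝ (Fin d) :=
    EuclideanSpace.single i (1:ℝ) + (1/2:ℝ) • EuclideanSpace.single j (1:ℝ) with hw
  have hwk : ∀ k, w k = if k = i then 1 else if k = j then 1/2 else 0 := by
    intro k
    simp only [hw, PiLp.add_apply, PiLp.smul_apply, EuclideanSpace.single_apply, smul_eq_mul]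
    by_cases hki : k = i
    · subst hki; rw [if_pos rfl, if_pos rfl, if_neg hij]; ring
    · rw [if_neg hki, if_neg hki]
      by_cases hkj : k = j
      · rw [if_pos hkj, if_pos hkj]; ring
      · rw [if_neg hkj, if_neg hkj]; ring
  have hsum_w : ∑ k, w k = 3/2 := by
    have : ∀ k, w k = (if k = i then (1:ℝ) else 0) + (if k = j then (1/2:ℝ) else 0) := by
      intro k
      rw [hwk k]
      split_ifs with h1 h2
      · exact absurd (h1.symm.trans h2) hij
      · ring
      · ring
      · ring
    rw [Finset.sum_congr rfl fun k _ => this k, Finset.sum_add_distrib]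
    simp
    norm_num
  rw [mem_extremePoints]
  have hmem : w ∈ C := by
    rw [mem_C_iff C hC]
    refine ⟨fun k => ?_, le_of_eq hsum_w⟩
    rw [hwk k]
    split <;> [norm_num; split <;> norm_num]
  refine ⟨hmem, ?_⟩
  intro y hy z hz hseg
  rw [mem_C_iff C hC] at hy hz
  obtain ⟨a, b, ha, hb, hab, hsum⟩ := hseg
  -- coordinate i
  have hi : y i = 1 ∧ z i = 1 := by
    have h := seg_pointwise hsum i
    rw [hwk i, if_pos rfl] at h
    exact comb_le ha hb hab (hy.1 i).2 (hz.1 i).2 h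
  -- coordinates outside {i,j}
  have hout : ∀ k, k ≠ i → k ≠ j → y k = 0 ∧ z k = 0 := by
    intro k hki hkj
    have h := seg_pointwise hsum k
    rw [hwk k, if_neg hki, if_neg hkj] at h
    exact comb_ge ha hb hab (hy.1 k).1 (hz.1 k).1 h
  -- coordinate j : each endpoint has j-th coordinate ≤ 1/2
  have hyj : y j ≤ 1/2 := by
    have := pair_le_sum (fun k => (hy.1 k).1) hij
    rw [hi.1] at this
    linarith [hy.2]
  have hzj : z j ≤ 1/2 := by
    have := pair_le_sum (fun k => (hz.1 k).1) hij
    rw [hi.2] at this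
    linarith [hz.2]
  have hj : y j = 1/2 ∧ z j = 1/2 := by
    have h := seg_pointwise hsum j
    rw [hwk j, if_neg (Ne.symm hij), if_pos rfl] at h
    exact comb_le ha hb hab hyj hzj h
  constructor <;> (apply PiLp.ext; intro k; rw [hwk k]) 
  · by_cases hki : k = i
    · rw [if_pos hki, hki, hi.1]
    · by_cases hkj : k = j
      · rw [if_neg hki, if_pos hkj, hkj, hj.1]
      · rw [if_neg hki, if_neg hkj, (hout k hki hkj).1]
  · by_cases hki : k = i
    · rw [if_pos hki, hki, hi.2]
    · by_cases hkj : k = j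
      · rw [if_neg hki, if_pos hkj, hkj, hj.2]
      · rw [if_neg hki, if_neg hkj, (hout k hki hkj).2]

/-- Forward direction: an extreme point is one of the candidates. -/
lemma forward {x : EuclideanSpace ℝ (Fin d)} (hx : x ∈ Set.extremePoints ℝ C) :
    x = 0 ∨ (∃ i, x = EuclideanSpace.single i (1:ℝ)) ∨
      (∃ i j, i ≠ j ∧
        x = EuclideanSpace.single i (1:ℝ) + (1/2:ℝ) • EuclideanSpace.single j (1:ℝ)) := by
  rw [mem_extremePoints, mem_C_iff C hC] at hx
  obtain ⟨⟨hbox, hsum⟩, hext⟩ := hx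
  -- Claim A : a strictly fractional coordinate forces the hyperplane to be tight
  have claimA : ∀ i, 0 < x i → x i < 1 → ∑ k, x k = 3/2 := by
    intro i h0 h1
    by_contra hne
    have hlt : ∑ k, x k < 3/2 := lt_of_le_of_ne hsum hne
    set ε : ℝ := min (min (x i) (1 - x i)) (3/2 - ∑ k, x k) with hε
    have hεpos : 0 < ε := by
      apply lt_min (lt_min h0 (by linarith)) (by linarith)
    have hε1 : ε ≤ x i := le_trans (min_le_left _ _) (min_le_left _ _)
    have hε2 : ε ≤ 1 - x i := le_trans (min_le_left _ _) (min_le_right _ _)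
    have hε3 : ε ≤ 3/2 - ∑ k, x k := min_le_right _ _
    set v : EuclideanSpace ℝ (Fin d) := ε • EuclideanSpace.single i (1:ℝ) with hv
    have hvk : ∀ k, v k = if k = i then ε else 0 := by
      intro k
      simp only [hv, PiLp.smul_apply, EuclideanSpace.single_apply, smul_eq_mul]
      split <;> ring
    have hmemy : x + v ∈ C := by
      rw [mem_C_iff C hC]
      constructor
      · intro k
        have := hbox k
        rw [PiLp.add_apply, hvk k]
        split
        · rename_i hk; subst hk; constructor <;> linarith
        · simpa using this
      · have : ∑ k, (x + v) k = ∑ k, x k + ε := by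
          simp only [PiLp.add_apply]
          rw [Finset.sum_add_distrib, Finset.sum_congr rfl fun k _ => hvk k]
          simp
        rw [this]; linarith
    have hmemz : x - v ∈ C := by
      rw [mem_C_iff C hC]
      constructor
      · intro k
        have := hbox k
        rw [PiLp.sub_apply, hvk k]
        split
        · rename_i hk; subst hk; constructor <;> linarith
        · simpa using this
      · have : ∑ k, (x - v) k = ∑ k, x k - ε := by
          simp only [PiLp.sub_apply]
          rw [Finset.sum_sub_distrib, Finset.sum_congr rfl fun k _ => hvk k]
          simp
        rw [this]; linarith
    have hseg : x ∈ openSegment ℝ (x + v) (x - v) :=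
      ⟨1/2, 1/2, by norm_num, by norm_num, by norm_num, by module⟩
    have := (hext _ hmemy _ hmemz hseg).1
    have h0' := congrArg (fun v : EuclideanSpace ℝ (Fin d) => v i) this
    rw [PiLp.add_apply, hvk i, if_pos rfl] at h0'
    simp at h0'
    exact absurd h0' (ne_of_gt hεpos)
  -- Claim B : at most one strictly fractional coordinate
  have claimB : ∀ i j, i ≠ j → 0 < x i → x i < 1 → 0 < x j → x j < 1 → False := by
    intro i j hij hi0 hi1 hj0 hj1
    set ε : ℝ := min (min (x i) (1 - x i)) (min (x j) (1 - x j)) with hε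
    have hεpos : 0 < ε := lt_min (lt_min hi0 (by linarith)) (lt_min hj0 (by linarith))
    have hε1 : ε ≤ x i := le_trans (min_le_left _ _) (min_le_left _ _)
    have hε2 : ε ≤ 1 - x i := le_trans (min_le_left _ _) (min_le_right _ _)
    have hε3 : ε ≤ x j := le_trans (min_le_right _ _) (min_le_left _ _)
    have hε4 : ε ≤ 1 - x j := le_trans (min_le_right _ _) (min_le_right _ _)
    set v : EuclideanSpace ℝ (Fin d) :=
      ε • EuclideanSpace.single i (1:ℝ) - ε • EuclideanSpace.single j (1:ℝ) with hv
    have hvk : ∀ k, v k = (if k = i then ε else 0) - (if k = j then ε else 0) := by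
      intro k
      simp only [hv, PiLp.sub_apply, PiLp.smul_apply, EuclideanSpace.single_apply,
        smul_eq_mul]
      congr 1 <;> (split <;> ring)
    have hsv : ∑ k, v k = 0 := by
      rw [Finset.sum_congr rfl fun k _ => hvk k, Finset.sum_sub_distrib]
      simp
    have hbnd : ∀ k, 0 ≤ (x + v) k ∧ (x + v) k ≤ 1 := by
      intro k
      have := hbox k
      rw [PiLp.add_apply, hvk k]
      by_cases hki : k = i
      · subst hki
        rw [if_pos rfl, if_neg hij]
        constructor <;> simp <;> linarith
      · by_cases hkj : k = j
        · subst hkj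
          rw [if_neg hki, if_pos rfl]
          constructor <;> simp <;> linarith
        · rw [if_neg hki, if_neg hkj]
          simpa using this
    have hbnd' : ∀ k, 0 ≤ (x - v) k ∧ (x - v) k ≤ 1 := by
      intro k
      have := hbox k
      rw [PiLp.sub_apply, hvk k]
      by_cases hki : k = i
      · subst hki
        rw [if_pos rfl, if_neg hij]
        constructor <;> simp <;> linarith
      · by_cases hkj : k = j
        · subst hkj
          rw [if_neg hki, if_pos rfl]
          constructor <;> simp <;> linarith
        · rw [if_neg hki, if_neg hkj]
          simpa using this
    have hmemy : x + v ∈ C := by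
      rw [mem_C_iff C hC]
      refine ⟨hbnd, ?_⟩
      have : ∑ k, (x + v) k = ∑ k, x k := by
        simp only [PiLp.add_apply]
        rw [Finset.sum_add_distrib, hsv, add_zero]
      rw [this]; exact hsum
    have hmemz : x - v ∈ C := by
      rw [mem_C_iff C hC]
      refine ⟨hbnd', ?_⟩
      have : ∑ k, (x - v) k = ∑ k, x k := by
        simp only [PiLp.sub_apply]
        rw [Finset.sum_sub_distrib, hsv, sub_zero]
      rw [this]; exact hsum
    have hseg : x ∈ openSegment ℝ (x + v) (x - v) :=
      ⟨1/2, 1/2, by norm_num, by norm_num, by norm_num, by module⟩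
    have := (hext _ hmemy _ hmemz hseg).1
    have h0' := congrArg (fun v : EuclideanSpace ℝ (Fin d) => v i) this
    rw [PiLp.add_apply, hvk i, if_pos rfl, if_neg hij] at h0'
    simp at h0'
    exact absurd h0' (ne_of_gt hεpos)
  by_cases hfree : ∃ j, 0 < x j ∧ x j < 1
  · -- exactly one fractional coordinate, hyperplane tight
    obtain ⟨j, hj0, hj1⟩ := hfree
    have htight : ∑ k, x k = 3/2 := claimA j hj0 hj1
    have h01 : ∀ k, k ≠ j → x k = 0 ∨ x k = 1 := by
      intro k hk
      rcases lt_or_eq_of_le (hbox k).1 with h | h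
      · rcases lt_or_eq_of_le (hbox k).2 with h' | h'
        · exact (claimB k j hk h h' hj0 hj1).elim
        · exact Or.inr h'
      · exact Or.inl h.symm
    -- there is a coordinate equal to 1
    have hone : ∃ i, i ≠ j ∧ x i = 1 := by
      by_contra hno
      push_neg at hno
      have hz : ∀ k, k ≠ j → x k = 0 := by
        intro k hk
        rcases h01 k hk with h | h
        · exact h
        · exact absurd h (hno k hk)
      have : ∑ k, x k = x j :=
        Finset.sum_eq_single_of_mem j (Finset.mem_univ j) fun k _ hk => hz k hk
      rw [this] at htight
      linarith
    obtain ⟨i, hij, hi1⟩ := hone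
    have hrest : ∀ k, k ≠ i → k ≠ j → x k = 0 := by
      intro k hki hkj
      rcases h01 k hkj with h | h
      · exact h
      · exfalso
        have := pair_le_sum (fun m => (hbox m).1) hki
        rw [h, hi1] at this
        linarith
    have hpair : x i + x j = 3/2 := by
      have hsub : ∑ k ∈ ({i, j} : Finset (Fin d)), x k = ∑ k, x k :=
        Finset.sum_subset (Finset.subset_univ _) fun k _ hk => by
          simp only [Finset.mem_insert, Finset.mem_singleton, not_or] at hk
          exact hrest k hk.1 hk.2
      rw [Finset.sum_pair hij] at hsub
      rw [hsub, htight]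
    have hxj : x j = 1/2 := by rw [hi1] at hpair; linarith
    refine Or.inr (Or.inr ⟨i, j, hij, PiLp.ext fun k => ?_⟩)
    rw [PiLp.add_apply, PiLp.smul_apply, EuclideanSpace.single_apply,
      EuclideanSpace.single_apply, smul_eq_mul]
    by_cases hki : k = i
    · subst hki
      rw [if_pos rfl, if_neg hij, hi1]; ring
    · by_cases hkj : k = j
      · subst hkj
        rw [if_neg hki, if_pos rfl, hxj]; ring
      · rw [if_neg hki, if_neg hkj, hrest k hki hkj]; ring
  · -- all coordinates are 0 or 1
    push_neg at hfree
    have h01 : ∀ k, x k = 0 ∨ x k = 1 := by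
      intro k
      rcases lt_or_eq_of_le (hbox k).1 with h | h
      · exact Or.inr (le_antisymm (hbox k).2 (hfree k h))
      · exact Or.inl h.symm
    by_cases hz : ∀ k, x k = 0
    · exact Or.inl (PiLp.ext fun k => hz k)
    · push_neg at hz
      obtain ⟨i, hi⟩ := hz
      have hi1 : x i = 1 := (h01 i).resolve_left hi
      have hrest : ∀ k, k ≠ i → x k = 0 := by
        intro k hk
        rcases h01 k with h | h
        · exact h
        · exfalso
          have := pair_le_sum (fun m => (hbox m).1) hk
          rw [h, hi1] at this
          linarith
      refine Or.inr (Or.inl ⟨i, PiLp.ext fun k => ?_⟩)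
      rw [EuclideanSpace.single_apply]
      by_cases hk : k = i
      · rw [if_pos hk, hk, hi1]
      · rw [if_neg hk, hrest k hk]

end Main

lemma phi_apply (p q m : Fin d) :
    phi (p, q) m = if m = p then 1 else if m = q ∧ p ≠ q then 1/2 else 0 := by
  by_cases hpq : p = q
  · subst hpq
    simp only [phi, if_pos rfl, EuclideanSpace.single_apply]
    by_cases hmp : m = p
    · simp [hmp]
    · simp [hmp]
  · simp only [phi, if_neg hpq, PiLp.add_apply, PiLp.smul_apply,
      EuclideanSpace.single_apply, smul_eq_mul]
    by_cases hmp : m = p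
    · subst hmp
      have hmq : ¬ m = q := hpq
      simp [hmq, hpq]
    · by_cases hmq : m = q
      · have hqp : ¬ q = p := fun h => hpq h.symm
        simp [hmp, hmq, hqp, hpq]
      · simp [hmp, hmq]

lemma phi_injective (hd : 2 ≤ d) : Function.Injective (phi (d := d)) := by
  intro ⟨i, j⟩ ⟨k, l⟩ h
  simp only [Prod.mk.injEq]
  have happ : ∀ m, phi (i, j) m = phi (k, l) m := fun m => congrArg (fun v : EuclideanSpace ℝ (Fin d) => v m) h
  have hik : i = k := by
    by_contra hik
    have h1 := happ i
    rw [phi_apply, phi_apply, if_pos rfl, if_neg hik] at h1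
    split at h1 <;> norm_num at h1
  subst hik
  refine ⟨rfl, ?_⟩
  by_contra hjl
  by_cases hij : i = j
  · have hli : ¬ l = i := fun h => hjl (hij.symm.trans h.symm)
    have h1 := happ l
    rw [phi_apply, phi_apply, if_neg hli, if_neg hli,
      if_neg (show ¬(l = j ∧ i ≠ j) from fun hc => hc.2 hij),
      if_pos (show l = l ∧ i ≠ l from ⟨rfl, fun h => hli h.symm⟩)] at h1
    norm_num at h1
  · have hji : ¬ j = i := fun h => hij h.symm
    have h1 := happ j
    rw [phi_apply, phi_apply, if_neg hji, if_neg hji,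
      if_pos (show j = j ∧ i ≠ j from ⟨rfl, hij⟩),
      if_neg (show ¬(j = l ∧ i ≠ l) from fun hc => hjl hc.1)] at h1
    norm_num at h1

lemma target_eq (hd : 2 ≤ d) :
    ({0} ∪ (Set.range fun i => EuclideanSpace.single i (1 : ℝ)) ∪
        {x : EuclideanSpace ℝ (Fin d) | ∃ i j, i ≠ j ∧
          x = EuclideanSpace.single i (1 : ℝ) + (1 / 2 : ℝ) • EuclideanSpace.single j (1 : ℝ)})
      = insert 0 (Set.range (phi (d := d))) := by
  ext x
  simp only [Set.mem_union, Set.mem_singleton_iff, Set.mem_range, Set.mem_setOf_eq,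
    Set.mem_insert_iff]
  constructor
  · rintro ((rfl | ⟨i, rfl⟩) | ⟨i, j, hij, rfl⟩)
    · exact Or.inl rfl
    · exact Or.inr ⟨(i, i), by simp [phi]⟩
    · exact Or.inr ⟨(i, j), by simp [phi, hij]⟩
  · rintro (rfl | ⟨⟨i, j⟩, rfl⟩)
    · exact Or.inl (Or.inl rfl)
    · by_cases hij : i = j
      · exact Or.inl (Or.inr ⟨i, by simp [phi, hij]⟩)
      · exact Or.inr ⟨i, j, hij, by simp [phi, hij]⟩

lemma zero_not_range (hd : 2 ≤ d) :
    (0 : EuclideanSpace ℝ (Fin d)) ∉ Set.range (phi (d := d)) := by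
  rintro ⟨⟨i, j⟩, h⟩
  have h1 := congrArg (fun v : EuclideanSpace ℝ (Fin d) => v i) h
  rw [phi_apply, if_pos rfl] at h1
  simpa using h1

end Stmt16

/-- The dwarfed `d`-cube `c_d = [0,1]^d ∩ {x | Σ x i ≤ 3/2}` has exactly `d² + 1` vertices
(extreme points): the origin, the `d` unit vectors `e i`, and the `d(d-1)` points
`e i + (1/2) e j` for `i ≠ j`. -/
theorem stmt16 {d : ℕ} (hd : 2 ≤ d) (C : Set (EuclideanSpace ℝ (Fin d)))
    (hC : C = {x : EuclideanSpace ℝ (Fin d) |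
      (∀ i, 0 ≤ x i ∧ x i ≤ 1) ∧ ∑ i, x i ≤ 3 / 2}) :
    Set.extremePoints ℝ C =
      {0} ∪ (Set.range fun i => EuclideanSpace.single i (1 : ℝ)) ∪
        {x | ∃ i j, i ≠ j ∧
          x = EuclideanSpace.single i (1 : ℝ) + (1 / 2 : ℝ) • EuclideanSpace.single j (1 : ℝ)} ∧
    (Set.extremePoints ℝ C).ncard = d ^ 2 + 1 := by
  have hset : Set.extremePoints ℝ C =
      {0} ∪ (Set.range fun i => EuclideanSpace.single i (1 : ℝ)) ∪
        {x | ∃ i j, i ≠ j ∧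
          x = EuclideanSpace.single i (1 : ℝ) + (1 / 2 : ℝ) • EuclideanSpace.single j (1 : ℝ)} := by
    ext x
    constructor
    · intro hx
      rcases Stmt16.forward C hC hx with rfl | ⟨i, rfl⟩ | ⟨i, j, hij, rfl⟩
      · exact Or.inl (Or.inl rfl)
      · exact Or.inl (Or.inr ⟨i, rfl⟩)
      · exact Or.inr ⟨i, j, hij, rfl⟩
    · rintro ((rfl | ⟨i, rfl⟩) | ⟨i, j, hij, rfl⟩)
      · exact Stmt16.zero_extreme C hC
      · exact Stmt16.single_extreme C hC i
      · exact Stmt16.mix_extreme C hC hij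
  refine ⟨hset, ?_⟩
  rw [hset, Stmt16.target_eq hd]
  rw [Set.ncard_insert_of_notMem (Stmt16.zero_not_range hd) (Set.finite_range _)]
  have : (Set.range (Stmt16.phi (d := d))).ncard = d ^ 2 := by
    rw [← Set.image_univ, Set.ncard_image_of_injective _ (Stmt16.phi_injective hd),
      Set.ncard_univ]
    simp [Nat.card_eq_fintype_card]
    ring
  rw [this]
end
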